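/- arXiv:2601.00435 — 9 statements merged into one kernel-verified Lean document; each statement's English description precedes it below -/
import Mathlib

section
/- For all positive integers a and b, 1 + (2^a - 1)(2^b - 1) / ((2^{gcd(a,b)} - 1) · 2^{(a+b)/2}) > 2^{(a+b)/2 - gcd(a,b)}, where the inequalities are over the reals and 2^{(a+b)/2} denotes the real square root of 2^{a+b}. -/
/-!
Write `A = 2^a`, `B = 2^b`, `G = 2^gcd(a,b)` and `s = √(AB)`. Multiplying the difference of the two
sides by `G (G - 1) s > 0` gives exactly `G (G - 1) (s - 1) + (A - G) (B - G)`, and this is positive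
because `1 < G ≤ A, B` (hence also `s ≥ G > 1`).
-/

theorem Real.sqrt_mul_div_lt_one_add {A B G : ℝ} (hG : 1 < G) (hGA : G ≤ A) (hGB : G ≤ B) :
    √(A * B) / G < 1 + (A - 1) * (B - 1) / ((G - 1) * √(A * B)) := by
  have hAB : 0 ≤ A * B := by nlinarith
  have hs : 1 < √(A * B) := Real.lt_sqrt_of_sq_lt (by nlinarith)
  have hD : 0 < G * (G - 1) * √(A * B) := by positivity
  have key : G * (G - 1) * √(A * B) * (1 + (A - 1) * (B - 1) / ((G - 1) * √(A * B)) - √(A * B) / G)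
      = G * (G - 1) * (√(A * B) - 1) + (A - G) * (B - G) := by
    have hG1 : G - 1 ≠ 0 := by linarith
    have hs0 : √(A * B) ≠ 0 := by linarith
    have hG0 : G ≠ 0 := by linarith
    field_simp
    rw [Real.sq_sqrt hAB]
    ring
  have hpos : 0 < G * (G - 1) * (√(A * B) - 1) + (A - G) * (B - G) := by
    have hs1 : 0 < √(A * B) - 1 := by linarith
    have hG1 : 0 < G - 1 := by linarith
    exact add_pos_of_pos_of_nonneg (by positivity) (mul_nonneg (by linarith) (by linarith))
  rw [← key] at hpos
  exact sub_pos.mp (pos_of_mul_pos_right hpos hD.le)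

/-- For all positive integers `a, b`,
`1 + (2^a - 1)(2^b - 1) / ((2^(gcd a b) - 1) * 2^((a+b)/2)) > 2^((a+b)/2 - gcd a b)`,
where `2^((a+b)/2)` is interpreted as the real square root of `2^(a+b)`. -/
theorem stmt0 (a b : ℕ) (ha : 0 < a) (hb : 0 < b) :
    1 + ((2 ^ a - 1) * (2 ^ b - 1)) /
      ((2 ^ Nat.gcd a b - 1) * Real.sqrt (2 ^ (a + b))) >
    Real.sqrt (2 ^ (a + b)) / 2 ^ Nat.gcd a b := by
  rw [pow_add]
  exact Real.sqrt_mul_div_lt_one_add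
    (one_lt_pow₀ one_lt_two (Nat.gcd_pos_of_pos_left b ha).ne')
    (pow_le_pow_right₀ one_le_two (Nat.gcd_le_left b ha))
    (pow_le_pow_right₀ one_le_two (Nat.gcd_le_right a hb))
end

section
/- Let q be a prime power and let C be a linear code over F_q of length n and redundancy r that is a non-cyclic b-burst-covering code with b ≥ 2, meaning every vector in F_q^n differs from some codeword only inside a window of b consecutive coordinates (without wraparound). Then n ≥ (q^{r-b+1} - 1)/(q - 1) + b - 1. -/
/-!
Every coset of `C` contains a burst, so `q ^ r` is at most the number of bursts. Sorting a burst
by the last window of `b` consecutive coordinates that contains its support, it either lives in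
the final window (`q ^ b` vectors) or lives in window `i < n - b` with a nonzero entry at `i`
(`q ^ b - q ^ (b - 1)` vectors for each `i`). Dividing `q ^ r ≤ q ^ b + (n - b)(q ^ b - q ^ (b - 1))`
by `q ^ (b - 1)` gives `q ^ (r - b + 1) - 1 ≤ (n - b + 1)(q - 1)`.
-/

open Finset

section Supported

variable {ι R : Type*} [Fintype ι] [DecidableEq ι] [Zero R] [Fintype R] [DecidableEq R]

def supportedOn (s : Finset ι) : Finset (ι → R) := {e | ∀ j ∉ s, e j = 0}

theorem supportedOn_eq_piFinset (s : Finset ι) :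
    (supportedOn s : Finset (ι → R)) = Fintype.piFinset fun j => if j ∈ s then univ else {0} := by
  ext e
  simp only [supportedOn, mem_filter, mem_univ, true_and, Fintype.mem_piFinset]
  refine forall_congr' fun j => ?_
  split_ifs <;> simp_all

theorem card_supportedOn (s : Finset ι) :
    #(supportedOn s : Finset (ι → R)) = Fintype.card R ^ #s := by
  rw [supportedOn_eq_piFinset, Fintype.card_piFinset]
  simp only [apply_ite card, card_univ, card_singleton]
  rw [prod_ite_mem, univ_inter, prod_const]

theorem supportedOn_mono {s t : Finset ι} (h : s ⊆ t) :
    (supportedOn s : Finset (ι → R)) ⊆ supportedOn t := by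
  intro e he
  simp only [supportedOn, mem_filter, mem_univ, true_and] at he ⊢
  exact fun j hj => he j fun hs => hj (h hs)

end Supported

def window (n i b : ℕ) : Finset (Fin n) := {j | i ≤ j ∧ j < i + b}

theorem card_window {n i b : ℕ} (h : i + b ≤ n) : #(window n i b) = b := by
  have : (window n i b).map Fin.valEmbedding = Ico i (i + b) := by
    ext m
    simp only [window, mem_map, mem_filter, mem_univ, true_and, Fin.valEmbedding_apply, mem_Ico]
    exact ⟨fun ⟨j, hj, hjm⟩ => hjm ▸ hj, fun hm => ⟨⟨m, by omega⟩, hm, rfl⟩⟩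
  rw [← card_map, this, Nat.card_Ico, Nat.add_sub_cancel_left]

theorem window_subset_window {n i b i' b' : ℕ} (hi : i ≤ i') (hb : i' + b' ≤ i + b) :
    window n i' b' ⊆ window n i b := by
  intro j
  simp only [window, mem_filter, mem_univ, true_and]
  omega

section Burst

variable {R : Type*} [Zero R] [Fintype R] [DecidableEq R]

def burstBall (n b : ℕ) : Finset (Fin n → R) :=
  (range (n + 1 - b)).biUnion fun i => supportedOn (window n i b)

theorem mem_burstBall {n b : ℕ} {e : Fin n → R} :
    e ∈ burstBall n b ↔ ∃ i, i + b ≤ n ∧ ∀ j : Fin n, e j ≠ 0 → i ≤ j ∧ j < i + b := by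
  simp only [burstBall, supportedOn, window, mem_biUnion, mem_range, mem_filter, mem_univ,
    true_and]
  refine exists_congr fun i => and_congr (by omega) (forall_congr' fun j => ?_)
  rw [not_imp_comm]

theorem burstBall_subset (n b : ℕ) :
    (burstBall n b : Finset (Fin n → R)) ⊆ supportedOn (window n (n - b) b) ∪
      (range (n - b)).biUnion fun i =>
        supportedOn (window n i b) \ supportedOn (window n (i + 1) b) := by
  intro e he
  obtain ⟨i, hi, hei⟩ : ∃ i ∈ range (n + 1 - b), e ∈ supportedOn (window n i b) :=
    mem_biUnion.mp he
  let P i := e ∈ (supportedOn (window n i b) : Finset (Fin n → R))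
  have hek : P (Nat.findGreatest P (n - b)) :=
    Nat.findGreatest_spec (m := i) (by simp only [mem_range] at hi; omega) hei
  rcases (Nat.findGreatest_le (P := P) (n - b)).lt_or_eq with hk | hk
  · refine mem_union_right _ (mem_biUnion.mpr ⟨_, mem_range.mpr hk, mem_sdiff.mpr ⟨hek, ?_⟩⟩)
    exact Nat.findGreatest_is_greatest (Nat.lt_succ_self _) hk
  · exact mem_union_left _ (hk ▸ hek)

theorem card_supportedOn_window_sdiff_le {n i b : ℕ} (hb : 0 < b) (h : i + b < n) :
    #((supportedOn (window n i b) : Finset (Fin n → R)) \ supportedOn (window n (i + 1) b)) ≤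
      Fintype.card R ^ b - Fintype.card R ^ (b - 1) := by
  -- such vectors are nonzero at `i`, so they avoid those supported on `[i + 1, i + b)`
  have hsub := supportedOn_mono (R := R) (window_subset_window (n := n) (Nat.le_succ i)
    (show i + 1 + (b - 1) ≤ i + b by omega))
  calc _ ≤ #((supportedOn (window n i b) : Finset (Fin n → R)) \
          supportedOn (window n (i + 1) (b - 1))) :=
        card_le_card (sdiff_subset_sdiff subset_rfl
          (supportedOn_mono (window_subset_window le_rfl (by omega))))
    _ = _ := by
      rw [card_sdiff_of_subset hsub, card_supportedOn, card_supportedOn, card_window h.le,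
        card_window (by omega)]

theorem card_burstBall_le {n b : ℕ} (hb : 0 < b) (hbn : b ≤ n) :
    #(burstBall n b : Finset (Fin n → R)) ≤
      Fintype.card R ^ b + (n - b) * (Fintype.card R ^ b - Fintype.card R ^ (b - 1)) := by
  calc _ ≤ #(supportedOn (window n (n - b) b) ∪ (range (n - b)).biUnion fun i =>
          (supportedOn (window n i b) : Finset (Fin n → R)) \
            supportedOn (window n (i + 1) b)) := card_le_card (burstBall_subset n b)
    _ ≤ Fintype.card R ^ b + ∑ i ∈ range (n - b),
          #((supportedOn (window n i b) : Finset (Fin n → R)) \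
            supportedOn (window n (i + 1) b)) := by
      refine (card_union_le _ _).trans (add_le_add ?_ card_biUnion_le)
      rw [card_supportedOn, card_window (by omega)]
    _ ≤ _ := by
      gcongr
      refine (sum_le_sum fun i hi => card_supportedOn_window_sdiff_le hb ?_).trans ?_
      · simp only [mem_range] at hi; omega
      · rw [sum_const, card_range, smul_eq_mul]

end Burst

theorem Submodule.natCard_quotient_le_card_of_forall_sub_mem {R M : Type*} [Ring R]
    [AddCommGroup M] [Module R M]
    (C : Submodule R M) (B : Finset M) (h : ∀ y, ∃ c ∈ C, y - c ∈ B) :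
    Nat.card (M ⧸ C) ≤ #B := by
  rw [← Nat.card_eq_finsetCard]
  refine Nat.card_le_card_of_surjective (fun e : B => Submodule.Quotient.mk e.1) ?_
  rintro ⟨y⟩
  obtain ⟨c, hc, hyc⟩ := h y
  refine ⟨⟨y - c, hyc⟩, (Submodule.Quotient.eq C).mpr ?_⟩
  simpa using C.neg_mem hc

theorem pow_sub_add_one_le_of_pow_le {q r b n : ℕ} (hq : 0 < q) (hb : 0 < b)
    (h : q ^ r ≤ q ^ b + (n - b) * (q ^ b - q ^ (b - 1))) :
    q ^ (r - b + 1) ≤ q + (n - b) * (q - 1) := by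
  rcases le_or_gt b r with hbr | hrb
  · refine Nat.le_of_mul_le_mul_left ?_ (pow_pos hq (b - 1))
    have hqb : q ^ b = q ^ (b - 1) * q := by rw [← pow_succ]; congr 1; omega
    calc q ^ (b - 1) * q ^ (r - b + 1) = q ^ r := by rw [← pow_add]; congr 1; omega
      _ ≤ _ := h
      _ = q ^ (b - 1) * (q + (n - b) * (q - 1)) := by rw [hqb, ← Nat.mul_sub_one]; ring
  · rw [Nat.sub_eq_zero_of_le hrb.le, zero_add, pow_one]
    exact Nat.le_add_right q _

theorem div_add_sub_one_le_of_pow_le {q m n b : ℕ} (hbn : b ≤ n)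
    (h : q ^ m ≤ q + (n - b) * (q - 1)) :
    (q ^ m - 1) / (q - 1) + b - 1 ≤ n := by
  have : (q ^ m - 1) / (q - 1) ≤ n - b + 1 :=
    Nat.div_le_of_le_mul (by rw [mul_add_one, mul_comm]; omega)
  omega

theorem stmt3_general (q n r b : ℕ) (F : Type*) [Field F] [Fintype F]
    (hq : Fintype.card F = q)
    (hr : r ≤ n) (hb : 2 ≤ b)
    (C : Submodule F (Fin n → F))
    (hdim : Module.finrank F C = n - r)
    (hcov : ∀ y : Fin n → F, ∃ c ∈ C, ∃ i : ℕ, i + b ≤ n ∧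
      ∀ j : Fin n, y j ≠ c j → i ≤ (j : ℕ) ∧ (j : ℕ) < i + b) :
    n ≥ (q ^ (r - b + 1) - 1) / (q - 1) + b - 1 := by
  classical
  obtain ⟨-, -, i, hin, -⟩ := hcov 0
  have hbn : b ≤ n := by omega
  have hcovBall : ∀ y, ∃ c ∈ C, y - c ∈ burstBall n b := fun y => by
    obtain ⟨c, hc, i, hin, hyc⟩ := hcov y
    exact ⟨c, hc, mem_burstBall.mpr ⟨i, hin, fun j hj => hyc j (sub_ne_zero.mp hj)⟩⟩
  have hcard : q ^ r ≤ q ^ b + (n - b) * (q ^ b - q ^ (b - 1)) := by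
    calc q ^ r = Nat.card ((Fin n → F) ⧸ C) := by
          rw [Module.natCard_eq_pow_finrank (K := F), Submodule.finrank_quotient, hdim,
            Module.finrank_fin_fun, Nat.card_eq_fintype_card, hq, Nat.sub_sub_self hr]
      _ ≤ #(burstBall n b : Finset (Fin n → F)) :=
          C.natCard_quotient_le_card_of_forall_sub_mem _ hcovBall
      _ ≤ _ := hq ▸ card_burstBall_le (by omega) hbn
  exact div_add_sub_one_le_of_pow_le hbn
    (pow_sub_add_one_le_of_pow_le (hq ▸ Fintype.card_pos) (by omega) hcard)

/-- Sphere-covering bound for non-cyclic b-burst-covering linear codes: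
`n ≥ (q^(r-b+1) - 1)/(q - 1) + b - 1`. -/
theorem stmt3 (q n r b : ℕ) (F : Type*) [Field F] [Fintype F]
    (hq : Fintype.card F = q)
    (hn : 0 < n) (hr : r ≤ n) (hb : 2 ≤ b)
    (C : Submodule F (Fin n → F))
    (hdim : Module.finrank F C = n - r)
    (hcov : ∀ y : Fin n → F, ∃ c ∈ C, ∃ i : ℕ, i + b ≤ n ∧
      ∀ j : Fin n, y j ≠ c j → i ≤ (j : ℕ) ∧ (j : ℕ) < i + b) :
    n ≥ (q ^ (r - b + 1) - 1) / (q - 1) + b - 1 :=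
  stmt3_general q n r b F hq hr hb C hdim hcov
end

section
/- Let g ∈ F_2[X] be monic of degree r and let f ∈ F_2[X] with deg f < r. Define a_k to be the coefficient of X^{r-1} in X^k f mod g. Then for every k ≥ 0, deg(X^k f mod g) = r - 1 - max{ j : a_k = a_{k+1} = ... = a_{k+j-1} = 0 }, where the maximum is taken to be 0 if a_k = 1 (and with the convention that this holds whenever the run of zeros starting at position k is finite). -/
/-!
Write `s = X^k f mod g`. As long as `j + deg s < r`, no reduction happens: `X^(k+j) f mod g`
is just `X^j s`, so `a_(k+j)` is the coefficient of `X^(r-1-j)` in `s`. These coefficients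
vanish for `j < r - 1 - deg s` and equal the leading coefficient of `s` at `j = r - 1 - deg s`.
-/

open Polynomial

namespace Polynomial

variable {R : Type*} [CommRing R] {g s : R[X]}

lemma mul_modByMonic_modByMonic (hg : g.Monic) (p q : R[X]) :
    (p * (q %ₘ g)) %ₘ g = (p * q) %ₘ g :=
  modByMonic_eq_of_dvd_sub hg <| by
    rw [← mul_sub, modByMonic_eq_sub_mul_div, sub_sub_cancel_left]
    exact dvd_mul_of_dvd_right (dvd_neg.2 (dvd_mul_right g _)) p

variable [Nontrivial R]

lemma X_pow_mul_modByMonic_of_lt (hg : g.Monic) {j : ℕ} (h : j + s.natDegree < g.natDegree) :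
    (X ^ j * s) %ₘ g = X ^ j * s :=
  (modByMonic_eq_self_iff hg).2 <| degree_lt_degree <|
    (natDegree_mul_le.trans (Nat.add_le_add_right (natDegree_X_pow_le j) _)).trans_lt h

lemma coeff_X_pow_mul_modByMonic_natDegree_sub_one (hg : g.Monic)
    (hs : s.natDegree < g.natDegree) {j : ℕ} (hj : j ≤ g.natDegree - 1 - s.natDegree) :
    ((X ^ j * s) %ₘ g).coeff (g.natDegree - 1) = s.coeff (g.natDegree - 1 - j) := by
  rw [X_pow_mul_modByMonic_of_lt hg (by omega), coeff_X_pow_mul', if_pos (by omega)]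

lemma coeff_X_pow_mul_modByMonic_natDegree_sub_one_eq_zero (hg : g.Monic)
    (hs : s.natDegree < g.natDegree) {j : ℕ} (hj : j < g.natDegree - 1 - s.natDegree) :
    ((X ^ j * s) %ₘ g).coeff (g.natDegree - 1) = 0 := by
  rw [coeff_X_pow_mul_modByMonic_natDegree_sub_one hg hs hj.le]
  exact coeff_eq_zero_of_natDegree_lt (by omega)

lemma coeff_X_pow_mul_modByMonic_natDegree_sub_one_eq_leadingCoeff (hg : g.Monic)
    (hs : s.natDegree < g.natDegree) :
    ((X ^ (g.natDegree - 1 - s.natDegree) * s) %ₘ g).coeff (g.natDegree - 1) =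
      s.leadingCoeff := by
  rw [coeff_X_pow_mul_modByMonic_natDegree_sub_one hg hs le_rfl, leadingCoeff]
  congr 1
  omega

end Polynomial

theorem stmt7_general (r : ℕ) (g f : Polynomial (ZMod 2))
    (hg : g.Monic) (hr : g.natDegree = r)
    (a : ℕ → ZMod 2)
    (ha : ∀ k : ℕ, a k = ((X ^ k * f) % g).coeff (r - 1)) :
    ∀ k : ℕ, (h : ∃ j : ℕ, a (k + j) ≠ 0) →
      ((X ^ k * f) % g).natDegree = r - 1 - Nat.find h := by
  subst hr
  intro k h
  rw [← modByMonic_eq_mod _ hg]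
  set s := (X ^ k * f) %ₘ g
  have ha' : ∀ j, a (k + j) = ((X ^ j * s) %ₘ g).coeff (g.natDegree - 1) := fun j => by
    rw [ha, ← modByMonic_eq_mod _ hg, mul_modByMonic_modByMonic hg, ← mul_assoc, ← pow_add,
      add_comm]
  have hs0 : s ≠ 0 := by
    obtain ⟨j, hj⟩ := h
    rintro hs0
    exact hj (by rw [ha', hs0, mul_zero, zero_modByMonic, coeff_zero])
  have hs : s.natDegree < g.natDegree := natDegree_lt_natDegree hs0 (degree_modByMonic_lt _ hg)
  have hfind : Nat.find h = g.natDegree - 1 - s.natDegree := by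
    refine (Nat.find_eq_iff h).2 ⟨?_, fun j hj => ?_⟩
    · rw [ha', coeff_X_pow_mul_modByMonic_natDegree_sub_one_eq_leadingCoeff hg hs]
      exact leadingCoeff_ne_zero.2 hs0
    · rw [ha', coeff_X_pow_mul_modByMonic_natDegree_sub_one_eq_zero hg hs hj, not_not]
  omega

/-- For a Galois-mode LFSR with monic connection polynomial `g` of degree `r`
and initial state `f` (with `deg f < r`), the degree of the `k`-th state
`X^k f mod g` equals `r - 1 - J`, where `J` is the length of the run of zeros
of the output sequence starting at position `k` (assumed finite). -/
theorem stmt7 (r : ℕ) (g f : Polynomial (ZMod 2))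
    (hg : g.Monic) (hr : g.natDegree = r) (hf : f.degree < r)
    (a : ℕ → ZMod 2)
    (ha : ∀ k : ℕ, a k = ((X ^ k * f) % g).coeff (r - 1)) :
    ∀ k : ℕ, (h : ∃ j : ℕ, a (k + j) ≠ 0) →
      ((X ^ k * f) % g).natDegree = r - 1 - Nat.find h :=
  stmt7_general r g f hg hr a ha
end

section
/- Let f(X) = Σ_{i=1}^e a_i X^{t_i} + Σ_{i=1}^d b_i X^{-u_i} be a rational function over F_{2^m}, where e, d > 0, the exponents t_e > ... > t_1 > 0 and u_d > ... > u_1 > 0 are all odd integers, and all coefficients a_i, b_i are nonzero. Then f is non-degenerate: there do not exist a rational function h over F_{2^m} and a constant c ∈ F_{2^m} such that f = h^2 - h + c. -/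
/-!
Use the valuation `v` at infinity, `v g = exp (deg g)`. The Laurent polynomial `f` has
`v f = exp t_e` with `t_e` odd and positive, because its top monomial dominates every other term.
On the other hand, if `v h ≤ 1` then `v (h^2 - h + c) ≤ 1`, while if `v h > 1` the square
dominates and `v (h^2 - h + c) = (v h)^2` is an even power of `exp 1`. Neither can equal `exp t_e`.
-/

open WithZero RatFunc

namespace RatFunc

variable {F : Type*} [Field F] [DecidableEq (RatFunc F)]

lemma inftyValuation_C_le_one (c : F) : inftyValuation F (C c) ≤ 1 := by
  rcases eq_or_ne c 0 with rfl | hc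
  · simp
  · exact (inftyValuation.C F hc).le

lemma inftyValuation_C_mul_X_pow {a : F} (ha : a ≠ 0) (n : ℕ) :
    inftyValuation F (C a * X ^ n) = exp (n : ℤ) := by
  simp [ha]

lemma inftyValuation_C_mul_inv_X_pow_lt_one (a : F) {n : ℕ} (hn : 0 < n) :
    inftyValuation F (C a * (X ^ n)⁻¹) < 1 := by
  rcases eq_or_ne a 0 with rfl | ha
  · simp
  · rw [map_mul, inftyValuation.C F ha, one_mul, map_inv₀, map_pow, inftyValuation.X, ← exp_nsmul,
      ← exp_neg, ← exp_zero, exp_lt_exp]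
    simpa using hn

lemma inftyValuation_sum_C_mul_X_pow {n : ℕ} (t : Fin (n + 1) → ℕ) (ht : StrictMono t)
    (a : Fin (n + 1) → F) (ha : a (Fin.last n) ≠ 0) :
    inftyValuation F (∑ i, C (a i) * X ^ t i) = exp (t (Fin.last n) : ℤ) := by
  rw [Valuation.map_sum_eq_of_lt _ (Finset.mem_univ (Fin.last n)),
    inftyValuation_C_mul_X_pow ha]
  intro i hi
  rw [inftyValuation_C_mul_X_pow ha]
  rcases eq_or_ne (a i) 0 with hai | hai
  · simp [hai]
  · have hlt : i < Fin.last n :=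
      lt_of_le_of_ne (Fin.le_last i) (by simpa using hi)
    simpa [inftyValuation_C_mul_X_pow hai] using ht hlt

lemma inftyValuation_sum_C_mul_inv_X_pow_lt_one {ι : Type*} (s : Finset ι) (b : ι → F)
    (u : ι → ℕ) (hu : ∀ i ∈ s, 0 < u i) :
    inftyValuation F (∑ i ∈ s, C (b i) * (X ^ u i)⁻¹) < 1 :=
  Valuation.map_sum_lt _ one_ne_zero fun i hi ↦
    inftyValuation_C_mul_inv_X_pow_lt_one (b i) (hu i hi)

lemma inftyValuation_sq_sub_self_add_C (h : RatFunc F) (c : F) :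
    inftyValuation F (h ^ 2 - h + C c) ≤ 1 ∨
      inftyValuation F (h ^ 2 - h + C c) = exp (2 * h.intDegree) := by
  set v := inftyValuation F
  rcases le_or_gt (v h) 1 with hvh | hvh
  · left
    refine (v.map_add _ _).trans (max_le ((v.map_sub _ _).trans (max_le ?_ hvh))
      (inftyValuation_C_le_one c))
    simpa only [map_pow] using pow_le_one₀ zero_le hvh
  · right
    have hh : h ≠ 0 := by rintro rfl; simp at hvh
    have hsq : v h < v (h ^ 2) := by
      rw [map_pow, sq]
      exact lt_mul_of_one_lt_left (zero_lt_one.trans hvh) hvh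
    have hc : v (C c) < v (h ^ 2 - h) := by
      rw [v.map_sub_eq_of_lt_left hsq]
      exact (inftyValuation_C_le_one c).trans_lt (hvh.trans hsq)
    rw [v.map_add_eq_of_lt_left hc, v.map_sub_eq_of_lt_left hsq, map_pow,
      show v h = exp h.intDegree from inftyValuation_of_nonzero F hh, ← exp_nsmul]
    simp

lemma inftyValuation_sq_sub_self_add_C_ne_exp {n : ℤ} (hn : Odd n) (hpos : 0 < n)
    (h : RatFunc F) (c : F) : inftyValuation F (h ^ 2 - h + C c) ≠ exp n := by
  intro heq
  rcases inftyValuation_sq_sub_self_add_C h c with hle | hev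
  · rw [heq, ← exp_zero, exp_le_exp] at hle
    omega
  · rw [heq, exp_inj] at hev
    exact Int.not_even_iff_odd.mpr hn ⟨h.intDegree, by omega⟩

end RatFunc

theorem stmt9_general (F : Type*) [Field F]
    (e d : ℕ) (he : 0 < e)
    (t : Fin e → ℕ) (u : Fin d → ℕ)
    (ht : StrictMono t)
    (htodd : ∀ i, Odd (t i))
    (hupos : ∀ i, 0 < u i)
    (a : Fin e → F) (b : Fin d → F)
    (ha : ∀ i, a i ≠ 0)
    (f : RatFunc F)
    (hf : f = ∑ i : Fin e, RatFunc.C (a i) * RatFunc.X ^ (t i)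
            + ∑ i : Fin d, RatFunc.C (b i) * (RatFunc.X ^ (u i))⁻¹) :
    ¬ ∃ (h : RatFunc F) (c : F), f = h ^ 2 - h + RatFunc.C c := by
  classical
  rintro ⟨h, c, rfl⟩
  obtain ⟨n, rfl⟩ := Nat.exists_eq_add_one_of_ne_zero he.ne'
  have htop := htodd (Fin.last n)
  have hpos : (0 : ℤ) < t (Fin.last n) := by exact_mod_cast htop.pos
  have hvf : inftyValuation F (h ^ 2 - h + C c) = exp (t (Fin.last n) : ℤ) := by
    have hlead := inftyValuation_sum_C_mul_X_pow t ht a (ha _)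
    rw [hf, Valuation.map_add_eq_of_lt_left, hlead]
    rw [hlead]
    exact (inftyValuation_sum_C_mul_inv_X_pow_lt_one _ b u fun i _ ↦ hupos i).trans
      (by rwa [← exp_zero, exp_lt_exp])
  exact inftyValuation_sq_sub_self_add_C_ne_exp htop.natCast hpos h c hvf

/-- Let `f(X) = Σ a_i X^(t_i) + Σ b_i X^(-u_i)` over `F_(2^m)`, with all
exponents odd and positive, strictly increasing, and all coefficients nonzero.
Then `f` is non-degenerate: there are no rational function `h` and constant `c`
with `f = h^2 - h + c`. -/
theorem stmt9 (m : ℕ) (hm : 0 < m) (F : Type*) [Field F] [Fintype F]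
    (hF : Fintype.card F = 2 ^ m)
    (e d : ℕ) (he : 0 < e) (hd : 0 < d)
    (t : Fin e → ℕ) (u : Fin d → ℕ)
    (ht : StrictMono t) (hu : StrictMono u)
    (htodd : ∀ i, Odd (t i)) (huodd : ∀ i, Odd (u i))
    (htpos : ∀ i, 0 < t i) (hupos : ∀ i, 0 < u i)
    (a : Fin e → F) (b : Fin d → F)
    (ha : ∀ i, a i ≠ 0) (hb : ∀ i, b i ≠ 0)
    (f : RatFunc F)
    (hf : f = ∑ i : Fin e, RatFunc.C (a i) * RatFunc.X ^ (t i)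
            + ∑ i : Fin d, RatFunc.C (b i) * (RatFunc.X ^ (u i))⁻¹) :
    ¬ ∃ (h : RatFunc F) (c : F), f = h ^ 2 - h + RatFunc.C c :=
  stmt9_general F e d he t u ht htodd hupos a b ha f hf
end

section
/- Let m ≥ 1 and e ≥ 1 with 2^{⌈m/2⌉} > 2e - 1. Let α be a primitive element of F_{2^m}. Then for every odd i with 1 ≤ i ≤ 2e - 1, the minimal polynomial of α^i over F_2 has degree exactly m. -/
/-- If `2^⌈m/2⌉ > 2e - 1` and `α` is primitive in `F_(2^m)`, then for every odd
`i` with `1 ≤ i ≤ 2e - 1`, the minimal polynomial of `α^i` over `F_2` has degree `m`. -/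
theorem stmt10 (m e : ℕ) (hm : 1 ≤ m) (he : 1 ≤ e)
    (hlong : 2 ^ ((m + 1) / 2) > 2 * e - 1)
    (F : Type*) [Field F] [Fintype F] [Algebra (ZMod 2) F]
    (hF : Fintype.card F = 2 ^ m)
    (α : F) (hα : orderOf α = 2 ^ m - 1) :
    ∀ i : ℕ, Odd i → 1 ≤ i → i ≤ 2 * e - 1 →
      (minpoly (ZMod 2) (α ^ i)).natDegree = m := by
  intro i hodd hi1 hi2
  have h2m : 1 < 2 ^ m := Nat.one_lt_pow (by omega) one_lt_two
  have hfd : FiniteDimensional (ZMod 2) F := Module.Finite.of_finite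
  have hrank : Module.finrank (ZMod 2) F = m := by
    have := Module.card_eq_pow_finrank (K := ZMod 2) (V := F)
    rw [ZMod.card, hF] at this
    exact (Nat.pow_right_injective le_rfl this.symm)
  set x := α ^ i with hx
  have hint : IsIntegral (ZMod 2) x := IsIntegral.of_finite _ _
  set d := (minpoly (ZMod 2) x).natDegree with hd
  have hdvd : d ∣ m := by rw [← hrank]; exact minpoly.degree_dvd hint
  have hdpos : 0 < d := minpoly.natDegree_pos hint
  have hα0 : α ≠ 0 := by
    intro h
    have h0 : orderOf (0 : F) = 0 :=
      orderOf_eq_zero_iff'.mpr (fun n hn => by simp [zero_pow hn.ne'])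
    rw [h, h0] at hα
    omega
  have hx0 : x ≠ 0 := pow_ne_zero _ hα0
  -- the subfield generated by x has 2^d elements, so x^(2^d - 1) = 1
  have hxpow : x ^ (2 ^ d - 1) = 1 := by
    set K := IntermediateField.adjoin (ZMod 2) {x} with hK
    have hxK : x ∈ K := IntermediateField.mem_adjoin_simple_self _ x
    have : Fintype K := Fintype.ofFinite K
    have hrk : Module.finrank (ZMod 2) K = d :=
      IntermediateField.adjoin.finrank hint
    have hcard : Fintype.card K = 2 ^ d := by
      have := Module.card_eq_pow_finrank (K := ZMod 2) (V := K)
      rw [ZMod.card, hrk] at this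
      exact this
    have : (⟨x, hxK⟩ : K) ^ (2 ^ d - 1) = 1 := by
      rw [← hcard]
      exact FiniteField.pow_card_sub_one_eq_one _ (by simp only [ne_eq, Subtype.ext_iff]; exact hx0)
    have := congrArg (Subtype.val) this
    push_cast at this
    simpa using this
  -- hence 2^m - 1 divides i * (2^d - 1)
  have hdvd2 : 2 ^ m - 1 ∣ i * (2 ^ d - 1) := by
    rw [← hα]
    apply orderOf_dvd_of_pow_eq_one
    rw [pow_mul]
    exact hxpow
  by_contra hne
  have hdlt : d < m := lt_of_le_of_ne (Nat.le_of_dvd (by omega) hdvd) hne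
  -- d ≤ m/2
  have hd2 : 2 * d ≤ m := by
    obtain ⟨k, hk⟩ := hdvd
    have : 2 ≤ k := by
      rcases Nat.lt_or_ge k 2 with h | h
      · interval_cases k <;> omega
      · exact h
    nlinarith
  -- 2^d - 1 ∣ 2^m - 1
  have hdvd3 : 2 ^ d - 1 ∣ 2 ^ m - 1 := by
    obtain ⟨k, hk⟩ := hdvd
    have := Nat.sub_dvd_pow_sub_pow (2 ^ d) 1 k
    rw [one_pow, ← pow_mul, ← hk] at this
    exact this
  obtain ⟨K, hKeq⟩ := hdvd3
  have hdp : 0 < 2 ^ d - 1 := by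
    have : 1 < 2 ^ d := Nat.one_lt_pow hdpos.ne' one_lt_two
    omega
  -- K divides i
  have hKi : K ∣ i := by
    obtain ⟨c, hc⟩ := hdvd2
    rw [hKeq] at hc
    exact ⟨c, Nat.eq_of_mul_eq_mul_left hdp
      (show (2 ^ d - 1) * i = (2 ^ d - 1) * (K * c) by rw [mul_comm i] at hc; linarith [hc])⟩
  have hKle : K ≤ i := Nat.le_of_dvd (by omega) hKi
  -- K ≥ 2^(m-d) ≥ 2^((m+1)/2)
  have hKge : 2 ^ (m - d) ≤ K := by
    have h1 : (2 ^ d - 1) * 2 ^ (m - d) ≤ 2 ^ m - 1 := by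
      have : 2 ^ d * 2 ^ (m - d) = 2 ^ m := by
        rw [← pow_add]; congr 1; omega
      have h2 : 1 ≤ 2 ^ (m - d) := Nat.one_le_two_pow
      calc (2 ^ d - 1) * 2 ^ (m - d) = 2 ^ d * 2 ^ (m - d) - 2 ^ (m - d) := by
            rw [Nat.sub_mul, one_mul]
        _ = 2 ^ m - 2 ^ (m - d) := by rw [this]
        _ ≤ 2 ^ m - 1 := by omega
    rw [hKeq] at h1
    exact Nat.le_of_mul_le_mul_left h1 hdp
  have hexp : (m + 1) / 2 ≤ m - d := by omega
  have : 2 ^ ((m + 1) / 2) ≤ 2 ^ (m - d) := Nat.pow_le_pow_right (by omega) hexp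
  omega
end

section
/- Let C be a binary cyclic code of length n with generator polynomial g ∈ F_2[X] of degree r having no repeated roots, where g = g_1 ⋯ g_e with g_i distinct irreducible of degrees d_1, ..., d_e and α_i a root of g_i. For f ∈ F_2[X], let LC(f) = { (α_1^i f(α_1), ..., α_e^i f(α_e)) : 0 ≤ i ≤ n-1 }. Then for f_1, f_2 ∈ F_2[X], LC(f_1) = LC(f_2) if and only if f_1(X) ≡ X^k f_2(X) (mod g(X)) for some k ≥ 0. -/
/-!
Since `G` is the product of the distinct minimal polynomials `g i` of the `α i`, divisibility by
`G` is detected by evaluation at the `α i`. In the ring `Fin e → F`, `LC f` is the orbit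
`{α ^ i * f(α) | i < n}` of the evaluation vector `f(α)`, and `α ^ n = 1` because
`G ∣ X ^ n - 1`; two such orbits coincide iff one vector is a power of `α` times the other, i.e.
iff `f₁(α) = α ^ k * f₂(α)`, i.e. iff `G ∣ f₁ - X ^ k * f₂`.
-/

open Polynomial

theorem Polynomial.monic_of_ne_zero_zmod_two {p : (ZMod 2)[X]} (hp : p ≠ 0) : p.Monic := by
  have hunit : ∀ x : ZMod 2, x ≠ 0 → x = 1 := by decide
  exact hunit _ (leadingCoeff_ne_zero.mpr hp)

theorem Polynomial.pairwise_isCoprime_of_irreducible_of_monic {K ι : Type*} [Field K]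
    {g : ι → K[X]} (hirr : ∀ i, Irreducible (g i)) (hmon : ∀ i, (g i).Monic)
    (hinj : Function.Injective g) : Pairwise (Function.onFun IsCoprime g) := by
  intro i j hij
  rw [Function.onFun, (hirr i).coprime_iff_not_dvd]
  intro hdvd
  exact hij (hinj (eq_of_monic_of_associated (hmon i) (hmon j)
    ((hirr i).associated_of_dvd (hirr j) hdvd)))

theorem Polynomial.prod_dvd_iff_forall_aeval_eq_zero {K A ι : Type*} [Field K] [Ring A]
    [Nontrivial A] [Algebra K A] [Fintype ι] {g : ι → K[X]} {α : ι → A}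
    (hirr : ∀ i, Irreducible (g i)) (hmon : ∀ i, (g i).Monic) (hinj : Function.Injective g)
    (hroot : ∀ i, aeval (α i) (g i) = 0) (h : K[X]) :
    ∏ i, g i ∣ h ↔ ∀ i, aeval (α i) h = 0 := by
  constructor
  · intro hdvd i
    obtain ⟨q, rfl⟩ := (Finset.dvd_prod_of_mem g (Finset.mem_univ i)).trans hdvd
    rw [map_mul, hroot, zero_mul]
  · intro hzero
    refine Fintype.prod_dvd_of_coprime
      (Polynomial.pairwise_isCoprime_of_irreducible_of_monic hirr hmon hinj) fun i => ?_
    rw [minpoly.eq_of_irreducible_of_monic (hirr i) (hroot i) (hmon i)]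
    exact minpoly.dvd K (α i) (hzero i)

section TruncatedOrbit

variable {M : Type*} [Monoid M] {a : M} {n : ℕ}

theorem pow_mod_eq_pow_of_pow_eq_one (ha : a ^ n = 1) (m : ℕ) : a ^ (m % n) = a ^ m := by
  conv_rhs => rw [← Nat.mod_add_div m n, pow_add, pow_mul, ha, one_pow, mul_one]

theorem setOf_pow_mul_subset_of_eq_pow_mul (hn : 0 < n) (ha : a ^ n = 1) {x y : M} {k : ℕ}
    (hxy : x = a ^ k * y) : {v | ∃ i < n, v = a ^ i * x} ⊆ {v | ∃ i < n, v = a ^ i * y} := by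
  rintro _ ⟨i, -, rfl⟩
  refine ⟨(i + k) % n, Nat.mod_lt _ hn, ?_⟩
  rw [pow_mod_eq_pow_of_pow_eq_one ha, pow_add, mul_assoc, hxy]

theorem setOf_pow_mul_eq_iff (hn : 0 < n) (ha : a ^ n = 1) (x y : M) :
    {v | ∃ i < n, v = a ^ i * x} = {v | ∃ i < n, v = a ^ i * y} ↔
      ∃ k : ℕ, x = a ^ k * y := by
  constructor
  · intro hset
    have hx : x ∈ {v | ∃ i < n, v = a ^ i * x} := ⟨0, hn, by rw [pow_zero, one_mul]⟩
    rw [hset] at hx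
    obtain ⟨k, -, hk⟩ := hx
    exact ⟨k, hk⟩
  · rintro ⟨k, hxy⟩
    -- `a ^ ((n - 1) * k)` inverts `a ^ k`, since `a ^ (n * k) = 1`.
    have hyx : y = a ^ ((n - 1) * k) * x := by
      rw [hxy, ← mul_assoc, ← pow_add, ← Nat.succ_mul, Nat.succ_eq_add_one,
        Nat.sub_add_cancel hn, pow_mul, ha, one_pow, one_mul]
    exact (setOf_pow_mul_subset_of_eq_pow_mul hn ha hxy).antisymm
      (setOf_pow_mul_subset_of_eq_pow_mul hn ha hyx)

end TruncatedOrbit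

theorem stmt12_general (n e : ℕ) (hn : 0 < n)
    (F : Type*) [Field F] [Algebra (ZMod 2) F]
    (g : Fin e → Polynomial (ZMod 2))
    (hirr : ∀ i, Irreducible (g i)) (hinj : Function.Injective g)
    (G : Polynomial (ZMod 2)) (hG : G = ∏ i : Fin e, g i)
    (hdvd : G ∣ X ^ n - 1)
    (α : Fin e → F) (hroot : ∀ i, Polynomial.aeval (α i) (g i) = 0)
    (LC : Polynomial (ZMod 2) → Set (Fin e → F))
    (hLC : ∀ f, LC f = {v : Fin e → F | ∃ i : ℕ, i < n ∧
      v = fun j => α j ^ i * Polynomial.aeval (α j) f}) :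
    ∀ f₁ f₂ : Polynomial (ZMod 2),
      LC f₁ = LC f₂ ↔ ∃ k : ℕ, G ∣ f₁ - X ^ k * f₂ := by
  have hG_dvd_iff : ∀ h, G ∣ h ↔ ∀ j, aeval (α j) h = 0 := hG ▸
    prod_dvd_iff_forall_aeval_eq_zero hirr (fun i => monic_of_ne_zero_zmod_two (hirr i).ne_zero)
      hinj hroot
  have hα : α ^ n = 1 := funext fun j => by
    simpa [sub_eq_zero] using (hG_dvd_iff _).mp hdvd j
  intro f₁ f₂
  rw [hLC, hLC]
  refine (setOf_pow_mul_eq_iff (x := fun j => aeval (α j) f₁) hn hα _).trans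
    (exists_congr fun k => ?_)
  simp only [hG_dvd_iff, funext_iff, Pi.mul_apply, Pi.pow_apply, map_sub, map_mul, map_pow,
    aeval_X, sub_eq_zero]

/-- For a binary cyclic code with squarefree generator polynomial
`G = g_1 ⋯ g_e` (distinct irreducibles with roots `α_i`), the sets
`LC(f) = {(α_1^i f(α_1), ..., α_e^i f(α_e)) : 0 ≤ i < n}` satisfy
`LC(f₁) = LC(f₂)` iff `f₁ ≡ X^k f₂ (mod G)` for some `k ≥ 0`. -/
theorem stmt12 (n e : ℕ) (hn : 0 < n) (he : 0 < e)
    (F : Type*) [Field F] [Algebra (ZMod 2) F]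
    (g : Fin e → Polynomial (ZMod 2))
    (hirr : ∀ i, Irreducible (g i)) (hinj : Function.Injective g)
    (G : Polynomial (ZMod 2)) (hG : G = ∏ i : Fin e, g i)
    (hdvd : G ∣ X ^ n - 1)
    (α : Fin e → F) (hroot : ∀ i, Polynomial.aeval (α i) (g i) = 0)
    (LC : Polynomial (ZMod 2) → Set (Fin e → F))
    (hLC : ∀ f, LC f = {v : Fin e → F | ∃ i : ℕ, i < n ∧
      v = fun j => α j ^ i * Polynomial.aeval (α j) f}) :
    ∀ f₁ f₂ : Polynomial (ZMod 2),
      LC f₁ = LC f₂ ↔ ∃ k : ℕ, G ∣ f₁ - X ^ k * f₂ :=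
  stmt12_general n e hn F g hirr hinj G hG hdvd α hroot LC hLC
end

section
/- Let g = g_1 ⋯ g_e ∈ F_2[X] with g_i distinct irreducible polynomials of degrees d_i, let r = deg g, and suppose g divides X^n - 1. The burst-covering radius b of the binary cyclic code of length n with generator polynomial g, defined as b = max over nonzero f ∈ F_2[X] with deg f < r of (min over k ≥ 0 of deg(X^k f mod g)) + 1, satisfies r - min_i d_i + 1 ≤ b ≤ r. -/
/-!
The upper bound is the shift `k = 0`: for `deg f < deg G` already `deg (f mod G) + 1 ≤ r`.
For the lower bound take a factor `g_i` of minimal degree and its cofactor `f = G / g_i`. Every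
remainder `X^k f mod G` is a multiple of `f`, and it is nonzero because `g_i`, dividing
`X^n - 1`, is coprime to `X`; so its degree is at least `deg f = r - d_i`.
-/

open Polynomial

theorem isCoprime_X_X_pow_sub_one {R : Type*} [CommRing R] {n : ℕ} (hn : n ≠ 0) :
    IsCoprime (X : R[X]) (X ^ n - 1) :=
  ⟨X ^ (n - 1), -1, by rw [← pow_succ, Nat.sub_add_cancel (Nat.one_le_iff_ne_zero.mpr hn)]; ring⟩

theorem not_dvd_X_pow_of_dvd_X_pow_sub_one {R : Type*} [CommRing R] {g : R[X]} {n : ℕ}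
    (hn : n ≠ 0) (hg : ¬ IsUnit g) (hgX : g ∣ X ^ n - 1) (k : ℕ) : ¬ g ∣ X ^ k := fun h =>
  hg (((isCoprime_X_X_pow_sub_one hn).pow_left (m := k)).isUnit_of_dvd' h hgX)

section
variable {K : Type*} [Field K]

noncomputable def minBurstLength (G f : K[X]) : ℕ :=
  sInf {w : ℕ | ∃ k : ℕ, w = ((X ^ k * f) % G).natDegree + 1}

noncomputable def burstCoveringRadius (G : K[X]) : ℕ :=
  sSup {v : ℕ | ∃ f : K[X], f ≠ 0 ∧ f.natDegree < G.natDegree ∧ v = minBurstLength G f}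

theorem minBurstLength_le {G f : K[X]} (hf : f.natDegree < G.natDegree) :
    minBurstLength G f ≤ G.natDegree := by
  have hG : G.natDegree ≠ 0 := by omega
  calc minBurstLength G f ≤ ((X ^ 0 * f) % G).natDegree + 1 := Nat.sInf_le ⟨0, rfl⟩
    _ ≤ G.natDegree := natDegree_mod_lt _ hG

theorem burstCoveringRadius_le (G : K[X]) : burstCoveringRadius G ≤ G.natDegree :=
  csSup_le' <| by
    rintro v ⟨f, -, hf, rfl⟩
    exact minBurstLength_le hf

theorem natDegree_add_one_le_minBurstLength {G f : K[X]} (hfG : f ∣ G)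
    (hG : ∀ k, ¬ G ∣ X ^ k * f) : f.natDegree + 1 ≤ minBurstLength G f := by
  obtain ⟨k, hk⟩ : minBurstLength G f ∈ _ := Nat.sInf_mem ⟨_, 0, rfl⟩
  rw [hk, add_le_add_iff_right]
  have hrem : (X ^ k * f) % G ≠ 0 := fun h => hG k (EuclideanDomain.mod_eq_zero.mp h)
  exact natDegree_le_of_dvd ((EuclideanDomain.dvd_mod_iff hfG).mpr (dvd_mul_left f _)) hrem

theorem natDegree_add_one_le_burstCoveringRadius {g f : K[X]} {n : ℕ} (hn : n ≠ 0)
    (hg : 0 < g.natDegree) (hgX : g ∣ X ^ n - 1) (hf : f ≠ 0) :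
    f.natDegree + 1 ≤ burstCoveringRadius (g * f) := by
  have hg0 : g ≠ 0 := ne_zero_of_natDegree_gt hg
  have hdeg : f.natDegree < (g * f).natDegree := by rw [natDegree_mul hg0 hf]; omega
  have hG : ∀ k, ¬ g * f ∣ X ^ k * f := fun k h =>
    not_dvd_X_pow_of_dvd_X_pow_sub_one hn (not_isUnit_of_natDegree_pos g hg) hgX k
      ((mul_dvd_mul_iff_right hf).mp h)
  calc f.natDegree + 1 ≤ minBurstLength (g * f) f :=
        natDegree_add_one_le_minBurstLength (dvd_mul_left f g) hG
    _ ≤ burstCoveringRadius (g * f) :=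
        le_csSup ⟨_, fun v ⟨f', _, hf', hv⟩ => hv ▸ minBurstLength_le hf'⟩ ⟨f, hf, hdeg, rfl⟩

end

theorem stmt13_general (n e r : ℕ) (hn : 0 < n) (he : 0 < e)
    (g : Fin e → Polynomial (ZMod 2))
    (hirr : ∀ i, Irreducible (g i))
    (G : Polynomial (ZMod 2)) (hG : G = ∏ i : Fin e, g i)
    (hr : G.natDegree = r) (hdvd : G ∣ X ^ n - 1)
    (b : ℕ)
    (hb : b = sSup {v : ℕ | ∃ f : Polynomial (ZMod 2), f ≠ 0 ∧ f.natDegree < r ∧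
      v = sInf {w : ℕ | ∃ k : ℕ, w = ((X ^ k * f) % G).natDegree + 1}}) :
    r - sInf {d : ℕ | ∃ i : Fin e, d = (g i).natDegree} + 1 ≤ b ∧ b ≤ r := by
  subst hr
  change b = burstCoveringRadius G at hb
  subst hb
  refine ⟨?_, burstCoveringRadius_le G⟩
  obtain ⟨i, hi⟩ : sInf {d : ℕ | ∃ i : Fin e, d = (g i).natDegree} ∈ _ :=
    Nat.sInf_mem ⟨_, ⟨0, he⟩, rfl⟩
  set f := ∏ j ∈ Finset.univ.erase i, g j
  have hGf : G = g i * f := by rw [hG, Finset.mul_prod_erase _ _ (Finset.mem_univ i)]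
  have hG0 : G ≠ 0 :=
    ne_zero_of_dvd_ne_zero (by simpa using X_pow_sub_C_ne_zero hn (1 : ZMod 2)) hdvd
  have hf0 : f ≠ 0 := right_ne_zero_of_mul (hGf ▸ hG0)
  have hgi : g i ∣ X ^ n - 1 := (Dvd.intro f hGf.symm).trans hdvd
  rw [hi, hGf, natDegree_mul (left_ne_zero_of_mul (hGf ▸ hG0)) hf0, Nat.add_sub_cancel_left]
  exact natDegree_add_one_le_burstCoveringRadius hn.ne' (hirr i).natDegree_pos hgi hf0

/-- Basic bounds on the burst-covering radius of a binary cyclic code with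
squarefree generator polynomial `G = g_1 ⋯ g_e` of degree `r`:
`r - min_i deg g_i + 1 ≤ b ≤ r`, where
`b = max_{f ≠ 0, deg f < r} min_{k ≥ 0} deg(X^k f mod G) + 1`. -/
theorem stmt13 (n e r : ℕ) (hn : 0 < n) (he : 0 < e)
    (g : Fin e → Polynomial (ZMod 2))
    (hirr : ∀ i, Irreducible (g i)) (hinj : Function.Injective g)
    (G : Polynomial (ZMod 2)) (hG : G = ∏ i : Fin e, g i)
    (hr : G.natDegree = r) (hdvd : G ∣ X ^ n - 1)
    (b : ℕ)
    (hb : b = sSup {v : ℕ | ∃ f : Polynomial (ZMod 2), f ≠ 0 ∧ f.natDegree < r ∧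
      v = sInf {w : ℕ | ∃ k : ℕ, w = ((X ^ k * f) % G).natDegree + 1}}) :
    r - sInf {d : ℕ | ∃ i : Fin e, d = (g i).natDegree} + 1 ≤ b ∧ b ≤ r :=
  stmt13_general n e r hn he g hirr G hG hr hdvd b hb
end

section
/- Let C be a binary cyclic code of length n whose generator polynomial g has no repeated roots and has an irreducible factor of degree 1. Then the burst-covering radius of C equals deg(g). -/
open Polynomial

/-- If the squarefree generator polynomial `G = g_1 ⋯ g_e` of a binary cyclic
code has an irreducible factor of degree 1, then the burst-covering radius
equals `deg G = r`. -/
theorem stmt16 (n e r : ℕ) (hn : 0 < n) (he : 0 < e)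
    (g : Fin e → Polynomial (ZMod 2))
    (hirr : ∀ i, Irreducible (g i)) (hinj : Function.Injective g)
    (G : Polynomial (ZMod 2)) (hG : G = ∏ i : Fin e, g i)
    (hr : G.natDegree = r) (hdvd : G ∣ X ^ n - 1)
    (hdeg1 : ∃ i : Fin e, (g i).natDegree = 1)
    (b : ℕ)
    (hb : b = sSup {v : ℕ | ∃ f : Polynomial (ZMod 2), f ≠ 0 ∧ f.natDegree < r ∧
      v = sInf {w : ℕ | ∃ k : ℕ, w = ((X ^ k * f) % G).natDegree + 1}}) :
    b = r := by
  -- monicity of the g i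
  have hmon : ∀ i, (g i).Monic := by
    intro i
    have h0 : g i ≠ 0 := (hirr i).ne_zero
    have : (g i).leadingCoeff ≠ 0 := leadingCoeff_ne_zero.mpr h0
    unfold Monic
    revert this
    generalize (g i).leadingCoeff = c
    revert c; decide
  have hGmon : G.Monic := by
    rw [hG]; exact monic_prod_of_monic _ _ fun i _ => hmon i
  have hGne : G ≠ 0 := hGmon.ne_zero
  -- the degree-1 factor
  obtain ⟨i0, hi0⟩ := hdeg1
  set p := g i0 with hp
  set f : Polynomial (ZMod 2) := ∏ i ∈ Finset.univ.erase i0, g i with hf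
  have hGpf : G = p * f := by
    rw [hG, hf, hp, Finset.mul_prod_erase _ _ (Finset.mem_univ i0)]
  have hfmon : f.Monic := monic_prod_of_monic _ _ fun i _ => hmon i
  have hfne : f ≠ 0 := hfmon.ne_zero
  have hpne : p ≠ 0 := (hirr i0).ne_zero
  have hdegf : f.natDegree = r - 1 ∧ 1 ≤ r := by
    have := natDegree_mul hpne hfne
    rw [← hGpf, hr, hi0] at this
    omega
  obtain ⟨hdf, hr1⟩ := hdegf
  -- p = X + 1
  have hpX : p = X + C 1 := by
    have h1 := (hmon i0).eq_X_add_C hi0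
    have hc : p.coeff 0 = 1 := by
      by_contra hc
      have hc0 : p.coeff 0 = 0 := by
        revert hc; generalize p.coeff 0 = c; revert c; decide
      rw [hc0, map_zero, add_zero] at h1
      -- then X ∣ X^n - 1, contradiction
      have hXd : (X : Polynomial (ZMod 2)) ∣ X ^ n - 1 := by
        refine dvd_trans ?_ hdvd
        rw [hGpf, ← h1]; exact dvd_mul_right _ _
      have heval : (X ^ n - 1 : Polynomial (ZMod 2)).eval 0 = 0 := by
        obtain ⟨q, hq⟩ := hXd
        rw [hq]; simp
      simp [zero_pow hn.ne'] at heval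
    rw [← hc]; exact h1
  -- key: for all k, (X^k * f) % G = f
  have hkey : ∀ k : ℕ, (X ^ k * f) % G = f := by
    intro k
    have hmod : (X ^ k * f) % G = (X ^ k * f) %ₘ G := by
      rw [Polynomial.mod_def, hGmon.leadingCoeff, inv_one, map_one, mul_one]
    have hdvdsub : G ∣ (X ^ k * f) - f := by
      have : (X ^ k * f) - f = (X ^ k - 1) * f := by ring
      rw [this, hGpf]
      apply mul_dvd_mul _ dvd_rfl
      have h11 : (X + C 1 : Polynomial (ZMod 2)) = X - C 1 := by
        have hneg : (-1 : ZMod 2) = 1 := by decide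
        rw [sub_eq_add_neg, ← map_neg, hneg]
      rw [hpX, h11]
      have := sub_dvd_pow_sub_pow (X : Polynomial (ZMod 2)) (C 1) k
      simpa using this
    have := modByMonic_eq_of_dvd_sub hGmon hdvdsub
    rw [hmod, this, (modByMonic_eq_self_iff hGmon).mpr]
    rw [degree_eq_natDegree hfne, degree_eq_natDegree hGne, hdf, hr]
    exact_mod_cast Nat.sub_lt hr1 one_pos
  -- set S
  set S := {v : ℕ | ∃ f : Polynomial (ZMod 2), f ≠ 0 ∧ f.natDegree < r ∧
      v = sInf {w : ℕ | ∃ k : ℕ, w = ((X ^ k * f) % G).natDegree + 1}} with hS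
  -- r ∈ S
  have hrS : r ∈ S := by
    refine ⟨f, hfne, by omega, ?_⟩
    have hset : {w : ℕ | ∃ k : ℕ, w = ((X ^ k * f) % G).natDegree + 1} = {r} := by
      ext w
      simp only [Set.mem_setOf_eq, Set.mem_singleton_iff]
      constructor
      · rintro ⟨k, rfl⟩; rw [hkey k, hdf]; omega
      · rintro rfl; exact ⟨0, by rw [hkey 0, hdf]; omega⟩
    rw [hset, csInf_singleton]
  -- upper bound
  have hub : ∀ v ∈ S, v ≤ r := by
    rintro v ⟨q, hq0, hqd, rfl⟩
    have hmem : (q % G).natDegree + 1 ∈ {w : ℕ | ∃ k : ℕ, w = ((X ^ k * q) % G).natDegree + 1} := by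
      exact ⟨0, by rw [pow_zero, one_mul]⟩
    have hle := Nat.sInf_le hmem
    have hqG : q % G = q := by
      rw [Polynomial.mod_def, hGmon.leadingCoeff, inv_one, map_one, mul_one]
      rw [(modByMonic_eq_self_iff hGmon).mpr]
      rw [degree_eq_natDegree hq0, degree_eq_natDegree hGne, hr]
      exact_mod_cast hqd
    rw [hqG] at hle
    omega
  rw [hb]
  exact le_antisymm (csSup_le ⟨r, hrS⟩ hub) (le_csSup ⟨r, hub⟩ hrS)
end

section
/- Let q be a prime power and n, b, r positive integers with b ≤ n and r ≤ n. If every nonzero vector in F_q^r can be expressed as a linear combination of b cyclically consecutive columns of some full-rank matrix H ∈ F_q^{r×n}, then n(q-1)q^{b-1} ≥ q^r - 1. -/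
/-!
A nonzero combination of a window of `b` consecutive columns whose first coefficient vanishes is
also a combination of the window starting one column later (its coefficients shifted down, with a
zero appended). Repeating this, every nonzero covered vector is a combination whose first
coefficient is nonzero, so the nonzero vectors of `F_q^r` inject into pairs of a start index and
such a coefficient vector, of which there are `n (q - 1) q^(b - 1)`.
-/

theorem Nat.card_subtype_ne {α : Type*} [Finite α] (a : α) :
    Nat.card {x : α // x ≠ a} = Nat.card α - 1 := by
  classical
  cases nonempty_fintype α
  simp [Nat.card_eq_fintype_card]

theorem Nat.card_fun_fin_succ_head_ne_zero {R : Type*} [Zero R] [Finite R] (m : ℕ) :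
    Nat.card {c : Fin (m + 1) → R // c 0 ≠ 0} = (Nat.card R - 1) * Nat.card R ^ m := by
  let e : {c : Fin (m + 1) → R // c 0 ≠ 0} ≃ {r : R // r ≠ 0} × (Fin m → R) :=
    ((Fin.consEquiv fun _ => R).symm.subtypeEquiv (q := fun p => p.1 ≠ 0) fun _ => Iff.rfl).trans
      (Equiv.prodSubtypeFstEquivSubtypeProd (α := R) (β := Fin m → R) (p := (· ≠ 0)))
  rw [Nat.card_congr e, Nat.card_prod, Nat.card_subtype_ne, Nat.card_fun, Nat.card_fin]

section WindowComb

variable {G R M : Type*} [AddCommMonoidWithOne G] [Semiring R] [AddCommMonoid M] [Module R M]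

def windowComb {b : ℕ} (v : G → M) (i : G) (c : Fin b → R) : M :=
  ∑ j, c j • v (i + (j : ℕ))

theorem windowComb_eq_of_head_eq_zero {m : ℕ} (v : G → M) (i : G) {c : Fin (m + 1) → R}
    (hc : c 0 = 0) : windowComb v i c = windowComb v (i + 1) (Fin.snoc (Fin.tail c) 0) := by
  rw [windowComb, windowComb, Fin.sum_univ_succ, Fin.sum_univ_castSucc]
  simp only [hc, zero_smul, zero_add, add_zero, Fin.snoc_castSucc, Fin.snoc_last, Fin.tail,
    Fin.val_succ, Fin.val_castSucc, Nat.cast_succ]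
  simp only [add_assoc, add_comm (1 : G)]

theorem exists_head_ne_zero_windowComb_eq {m : ℕ} (v : G → M) (i : G) {c : Fin (m + 1) → R}
    (hc : c ≠ 0) :
    ∃ i' : G, ∃ c' : Fin (m + 1) → R, c' 0 ≠ 0 ∧ windowComb v i' c' = windowComb v i c := by
  obtain ⟨k, hk⟩ := Function.ne_iff.mp hc
  clear hc
  induction k using Fin.induction generalizing i c with
  | zero => exact ⟨i, c, hk, rfl⟩
  | succ k ih =>
    by_cases h0 : c 0 = 0
    · rw [windowComb_eq_of_head_eq_zero v i h0]
      exact ih (i + 1) (by simpa [Fin.tail] using hk)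
    · exact ⟨i, c, h0, rfl⟩

theorem card_ne_zero_le_of_forall_eq_windowComb [Finite G] [Finite R] {b : ℕ} (v : G → M)
    (hv : ∀ x : M, x ≠ 0 → ∃ i : G, ∃ c : Fin b → R, x = windowComb v i c) :
    Nat.card {x : M // x ≠ 0} ≤ Nat.card G * ((Nat.card R - 1) * Nat.card R ^ (b - 1)) := by
  rcases b with _ | m
  · have : IsEmpty {x : M // x ≠ 0} := ⟨fun ⟨x, hx⟩ => by
      obtain ⟨i, c, rfl⟩ := hv x hx
      exact hx (Finset.sum_of_isEmpty _)⟩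
    simp
  have hnorm : ∀ x : {x : M // x ≠ 0}, ∃ i : G, ∃ c : Fin (m + 1) → R,
      c 0 ≠ 0 ∧ x.1 = windowComb v i c := by
    rintro ⟨x, hx⟩
    obtain ⟨i, c, rfl⟩ := hv x hx
    have hc : c ≠ 0 := by
      rintro rfl
      exact hx (by simp [windowComb])
    obtain ⟨i', c', hc', heq⟩ := exists_head_ne_zero_windowComb_eq v i hc
    exact ⟨i', c', hc', heq.symm⟩
  choose i c hc hx using hnorm
  have hinj : Function.Injective
      fun x => (i x, (⟨c x, hc x⟩ : {c : Fin (m + 1) → R // c 0 ≠ 0})) := by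
    intro x y hxy
    simp only [Prod.mk.injEq, Subtype.mk.injEq] at hxy
    exact Subtype.ext (by rw [hx x, hx y, hxy.1, hxy.2])
  simpa [Nat.card_prod, Nat.card_fun_fin_succ_head_ne_zero] using
    Nat.card_le_card_of_injective _ hinj

end WindowComb

theorem stmt18_general (q n r b : ℕ) (F : Type*) [Field F] [Fintype F]
    (hq : Fintype.card F = q)
    [NeZero n]
    (H : Matrix (Fin r) (ZMod n) F)
    (hcov : ∀ z : Fin r → F, z ≠ 0 → ∃ i : ZMod n, ∃ c : Fin b → F,
      z = ∑ j : Fin b, c j • (fun k : Fin r => H k (i + ((j : ℕ) : ZMod n)))) :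
    n * (q - 1) * q ^ (b - 1) ≥ q ^ r - 1 := by
  have hcount := card_ne_zero_le_of_forall_eq_windowComb (fun i k => H k i) hcov
  rw [Nat.card_subtype_ne, Nat.card_fun, Nat.card_fin, Nat.card_zmod, Nat.card_eq_fintype_card,
    hq] at hcount
  rw [mul_assoc]
  exact hcount

/-- Counting bound: if every nonzero vector of `F_q^r` is a linear combination
of `b` cyclically consecutive columns of a full-rank matrix `H ∈ F_q^(r×n)`,
then `n (q-1) q^(b-1) ≥ q^r - 1`. -/
theorem stmt18 (q n r b : ℕ) (F : Type*) [Field F] [Fintype F]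
    (hq : Fintype.card F = q)
    [NeZero n] (hb : 0 < b) (hbn : b ≤ n) (hr : 0 < r) (hrn : r ≤ n)
    (H : Matrix (Fin r) (ZMod n) F) (hrank : H.rank = r)
    (hcov : ∀ z : Fin r → F, z ≠ 0 → ∃ i : ZMod n, ∃ c : Fin b → F,
      z = ∑ j : Fin b, c j • (fun k : Fin r => H k (i + ((j : ℕ) : ZMod n)))) :
    n * (q - 1) * q ^ (b - 1) ≥ q ^ r - 1 :=
  stmt18_general q n r b F hq H hcov
end
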